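/- Let V be a vector field on ℝ⁵ given by V = x₁ ∂/∂x₁ + x₂ ∂/∂x₂ + x₃ ∂/∂x₃ + x₄ ∂/∂x₄ + ∂/∂x₅, let h be the Kenmotsu metric with orthonormal frame e_i = e^{-x₅} ∂/∂x_i (i = 1,...,4), e₅ = ∂/∂x₅, and η(P) = h(P, e₅). Then the Lie derivative satisfies (L_V h)(P,Q) = 4[h(P,Q) - η(P)η(Q)] for all vector fields P, Q, and consequently Σᵢ (L_V h)(e_i, e_i) = 16. -/

import Mathlib

noncomputable section

/-- The Kenmotsu metric on ℝ⁵ making e_i = e^{-x₅} ∂/∂x_i (i=1,…,4), e₅ = ∂/∂x₅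
orthonormal, evaluated on vector fields P, Q at the point x. -/
def gmet (P Q : (Fin 5 → ℝ) → (Fin 5 → ℝ)) (x : Fin 5 → ℝ) : ℝ :=
  Real.exp (2 * x 4) * (∑ i : Fin 4, P x i.castSucc * Q x i.castSucc) + P x 4 * Q x 4

/-- Lie bracket of vector fields on ℝ⁵: [V,P] = DP·V - DV·P. -/
def vbracket (V P : (Fin 5 → ℝ) → (Fin 5 → ℝ)) (x : Fin 5 → ℝ) : Fin 5 → ℝ :=
  fderiv ℝ P x (V x) - fderiv ℝ V x (P x)

/-- Lie derivative of the metric `gmet` along V: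
(L_V h)(P,Q) = V(h(P,Q)) - h([V,P],Q) - h(P,[V,Q]). -/
def lieDeriv (V P Q : (Fin 5 → ℝ) → (Fin 5 → ℝ)) (x : Fin 5 → ℝ) : ℝ :=
  fderiv ℝ (gmet P Q) x (V x) - gmet (vbracket V P) Q x - gmet P (vbracket V Q) x

/-- The potential vector field V = x₁∂₁ + x₂∂₂ + x₃∂₃ + x₄∂₄ + ∂₅. -/
def Vfield (x : Fin 5 → ℝ) : Fin 5 → ℝ :=
  fun i => if (i : ℕ) < 4 then x i else 1

/-- The unit Reeb field e₅ = ∂/∂x₅. -/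
def e5 (_ : Fin 5 → ℝ) : Fin 5 → ℝ :=
  fun i => if i = 4 then 1 else 0

/-- The contact form η(P) = h(P, e₅). -/
def etaForm (P : (Fin 5 → ℝ) → (Fin 5 → ℝ)) (x : Fin 5 → ℝ) : ℝ :=
  gmet P e5 x

/-- The orthonormal frame e₁,…,e₅ with e_i = e^{-x₅} ∂/∂x_i (i=1,…,4), e₅ = ∂/∂x₅. -/
def frame (i : Fin 5) (x : Fin 5 → ℝ) : Fin 5 → ℝ :=
  fun j => if j = i then (if (i : ℕ) < 4 then Real.exp (-(x 4)) else 1) else 0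

/-- Illustration 6.1, equations (5.5)–(5.6): (L_V h)(P,Q) = 4[h(P,Q) - η(P)η(Q)] for all
smooth vector fields P, Q, and Σᵢ (L_V h)(eᵢ,eᵢ) = 16. -/
def Amap : (Fin 5 → ℝ) →L[ℝ] (Fin 5 → ℝ) :=
  ContinuousLinearMap.pi (fun i => if (i : ℕ) < 4 then ContinuousLinearMap.proj i else 0)

lemma Amap_apply (v : Fin 5 → ℝ) (i : Fin 5) :
    Amap v i = if (i : ℕ) < 4 then v i else 0 := by
  simp [Amap, ContinuousLinearMap.pi_apply]
  split_ifs <;> simp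

lemma hasFDerivAt_V (x : Fin 5 → ℝ) : HasFDerivAt Vfield Amap x := by
  have : Vfield = fun y => Amap y + (fun i : Fin 5 => if (i : ℕ) < 4 then (0:ℝ) else 1) := by
    funext y i
    simp only [Vfield, Pi.add_apply, Amap_apply]
    split_ifs <;> simp
  rw [this]
  exact Amap.hasFDerivAt.add_const _

lemma fderiv_V (x : Fin 5 → ℝ) : fderiv ℝ Vfield x = Amap := (hasFDerivAt_V x).fderiv

lemma V_at_4 (x : Fin 5 → ℝ) : Vfield x 4 = 1 := by
  have : ¬ (((4:Fin 5) : ℕ) < 4) := by decide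
  simp [Vfield, this]

set_option maxHeartbeats 1000000 in
theorem main (P Q : (Fin 5 → ℝ) → (Fin 5 → ℝ)) (hP : ContDiff ℝ (⊤ : ℕ∞) P) (hQ : ContDiff ℝ (⊤ : ℕ∞) Q)
    (x : Fin 5 → ℝ) :
    lieDeriv Vfield P Q x = 4 * (gmet P Q x - etaForm P x * etaForm Q x) := by
  have hPd : HasFDerivAt P (fderiv ℝ P x) x := (hP.differentiable (by simp) x).hasFDerivAt
  have hQd : HasFDerivAt Q (fderiv ℝ Q x) x := (hQ.differentiable (by simp) x).hasFDerivAt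
  set fP := fderiv ℝ P x with hfP
  set fQ := fderiv ℝ Q x with hfQ
  have hPi : ∀ i : Fin 5, HasFDerivAt (fun y => P y i) ((ContinuousLinearMap.proj i).comp fP) x :=
    hasFDerivAt_pi'.1 hPd
  have hQi : ∀ i : Fin 5, HasFDerivAt (fun y => Q y i) ((ContinuousLinearMap.proj i).comp fQ) x :=
    hasFDerivAt_pi'.1 hQd
  have hE : HasFDerivAt (fun y : Fin 5 → ℝ => Real.exp (2 * y 4))
      (Real.exp (2 * x 4) • ((2:ℝ) • ContinuousLinearMap.proj (4 : Fin 5))) x :=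
    ((hasFDerivAt_apply (4 : Fin 5) x).const_mul 2).exp
  have hsum : HasFDerivAt (fun y => ∑ i : Fin 4, P y i.castSucc * Q y i.castSucc)
      (∑ i : Fin 4, (P x i.castSucc • ((ContinuousLinearMap.proj i.castSucc).comp fQ)
        + Q x i.castSucc • ((ContinuousLinearMap.proj i.castSucc).comp fP))) x :=
    HasFDerivAt.fun_sum (fun (i : Fin 4) _ => (hPi i.castSucc).mul (hQi i.castSucc))
  have htot : HasFDerivAt (gmet P Q)
      ((Real.exp (2 * x 4) •
        (∑ i : Fin 4, (P x i.castSucc • ((ContinuousLinearMap.proj i.castSucc).comp fQ)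
          + Q x i.castSucc • ((ContinuousLinearMap.proj i.castSucc).comp fP)))
        + (∑ i : Fin 4, P x i.castSucc * Q x i.castSucc) •
          (Real.exp (2 * x 4) • ((2:ℝ) • ContinuousLinearMap.proj (4 : Fin 5))))
        + (P x 4 • ((ContinuousLinearMap.proj (4:Fin 5)).comp fQ)
          + Q x 4 • ((ContinuousLinearMap.proj (4:Fin 5)).comp fP))) x :=
    (hE.mul hsum).add ((hPi 4).mul (hQi 4))
  rw [lieDeriv, htot.fderiv]
  have hc : ∀ i : Fin 4, ((i.castSucc : Fin 5) : ℕ) < 4 := fun i => by simpa using i.isLt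
  have h4 : ¬ (((4 : Fin 5) : ℕ) < 4) := by decide
  simp only [gmet, etaForm, e5, vbracket, fderiv_V, ContinuousLinearMap.add_apply,
    ContinuousLinearMap.smul_apply, ContinuousLinearMap.sum_apply,
    ContinuousLinearMap.comp_apply, ContinuousLinearMap.proj_apply, Pi.sub_apply,
    Amap_apply, smul_eq_mul, V_at_4, hc, h4, if_true, if_false, ite_true, ite_false]
  rw [← hfP, ← hfQ]
  have hne : ∀ i : Fin 4, (i.castSucc : Fin 5) ≠ 4 := by decide
  simp only [hne, if_false, ite_false, mul_zero, Finset.sum_const_zero]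
  have key : (∑ i : Fin 4, (P x i.castSucc * fQ (Vfield x) i.castSucc
        + Q x i.castSucc * fP (Vfield x) i.castSucc))
      - (∑ i : Fin 4, (fP (Vfield x) i.castSucc - P x i.castSucc) * Q x i.castSucc)
      - (∑ i : Fin 4, P x i.castSucc * (fQ (Vfield x) i.castSucc - Q x i.castSucc))
      = 2 * ∑ i : Fin 4, P x i.castSucc * Q x i.castSucc := by
    rw [← Finset.sum_sub_distrib, ← Finset.sum_sub_distrib, Finset.mul_sum]
    exact Finset.sum_congr rfl fun i _ => by ring
  linear_combination Real.exp (2 * x 4) * key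

lemma frame_smooth (i : Fin 5) : ContDiff ℝ (⊤ : ℕ∞) (frame i) := by
  apply contDiff_pi.2
  intro j
  simp only [frame]
  by_cases h : j = i
  · by_cases h2 : (i : ℕ) < 4
    · simp only [h, h2, if_true, ite_true]
      exact Real.contDiff_exp.comp (contDiff_apply ℝ ℝ (4 : Fin 5)).neg
    · simpa [h, h2] using contDiff_const (c := (1:ℝ))
  · simpa [h] using contDiff_const (c := (0:ℝ))

theorem part2 (x : Fin 5 → ℝ) :
    ∑ i : Fin 5, lieDeriv Vfield (frame i) (frame i) x = 16 := by
  have h := fun i : Fin 5 => main (frame i) (frame i) (frame_smooth i) (frame_smooth i) x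
  simp only [h]
  have hexp : Real.exp (2 * x 4) * (Real.exp (-(x 4)) * Real.exp (-(x 4))) = 1 := by
    rw [← Real.exp_add, ← Real.exp_add, show 2 * x 4 + (-x 4 + -x 4) = 0 by ring, Real.exp_zero]
  simp [gmet, etaForm, e5, frame, Fin.sum_univ_five, Fin.sum_univ_four]
  norm_num [Fin.ext_iff, show ((0:Fin 5):ℕ) = 0 from rfl, show ((1:Fin 5):ℕ) = 1 from rfl,
    show ((2:Fin 5):ℕ) = 2 from rfl, show ((3:Fin 5):ℕ) = 3 from rfl,
    show ((4:Fin 5):ℕ) = 4 from rfl,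
    show Fin.castSucc (0:Fin 4) = (0:Fin 5) from rfl, show Fin.castSucc (1:Fin 4) = (1:Fin 5) from rfl,
    show Fin.castSucc (2:Fin 4) = (2:Fin 5) from rfl, show Fin.castSucc (3:Fin 4) = (3:Fin 5) from rfl]
  linear_combination 16 * hexp


/-- Illustration stmt -/
theorem stmt_15 :
    (∀ P Q : (Fin 5 → ℝ) → (Fin 5 → ℝ), ContDiff ℝ (⊤ : ℕ∞) P → ContDiff ℝ (⊤ : ℕ∞) Q →
      ∀ x : Fin 5 → ℝ,
        lieDeriv Vfield P Q x = 4 * (gmet P Q x - etaForm P x * etaForm Q x)) ∧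
    (∀ x : Fin 5 → ℝ, ∑ i : Fin 5, lieDeriv Vfield (frame i) (frame i) x = 16) :=
  ⟨main, part2⟩

end
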